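/- For r ≥ 3 and k ≥ 1, if G is a K_{1,r}-free graph and H is an induced subgraph of G with chromatic number at most k, then the order of H is at most (r-1)·k·γ(G). -/

import Mathlib

open Finset

variable {V : Type*}

/-- A finset is independent in `G` : no two of its vertices are adjacent. -/
def IsIndepFinset (G : SimpleGraph V) (S : Finset V) : Prop :=
  ∀ u ∈ S, ∀ v ∈ S, ¬ G.Adj u v

/-- A finset dominates `G` : every vertex outside it has a neighbour inside it. -/
def IsDomFinset (G : SimpleGraph V) (D : Finset V) : Prop :=
  ∀ v, v ∉ D → ∃ u ∈ D, G.Adj u v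

/-- The independence number of `G`. -/
noncomputable def indepNum [Fintype V] (G : SimpleGraph V) : ℕ :=
  sSup {n | ∃ S : Finset V, IsIndepFinset G S ∧ S.card = n}

/-- The domination number of `G`. -/
noncomputable def domNum [Fintype V] (G : SimpleGraph V) : ℕ :=
  sInf {n | ∃ D : Finset V, IsDomFinset G D ∧ D.card = n}

/-- `G` is `K_{1,r}`-free: no vertex has `r` pairwise nonadjacent neighbours. -/
def K1rFree (G : SimpleGraph V) (r : ℕ) : Prop :=
  ¬ ∃ (v : V) (A : Finset V), (∀ a ∈ A, G.Adj v a) ∧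
      (∀ a ∈ A, ∀ b ∈ A, a ≠ b → ¬ G.Adj a b) ∧ A.card = r

/-! Every colour class of `H` is independent in `G`, so it suffices to bound independent sets
by `(r - 1) · γ(G)`. Send each vertex of an independent set to a vertex of a minimum dominating
set that dominates it: the fibre over `d` lies in the closed neighbourhood of `d`, so it is `{d}`
or a set of pairwise nonadjacent neighbours of `d`, and `K_{1,r}`-freeness bounds it by
`r - 1`. -/

section

variable {G : SimpleGraph V}

theorem exists_isDomFinset_card_eq_domNum [Fintype V] (G : SimpleGraph V) :
    ∃ D, IsDomFinset G D ∧ D.card = domNum G :=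
  Nat.sInf_mem (s := {n | ∃ D : Finset V, IsDomFinset G D ∧ D.card = n})
    ⟨_, Finset.univ, fun v hv => absurd (Finset.mem_univ v) hv, rfl⟩

theorem IsDomFinset.exists_dominator {D : Finset V} (hD : IsDomFinset G D) :
    ∃ f : V → V, ∀ v, f v ∈ D ∧ (f v = v ∨ G.Adj (f v) v) := by
  classical
  refine ⟨fun v => if h : v ∈ D then v else (hD v h).choose, fun v => ?_⟩
  by_cases h : v ∈ D
  · simp [h]
  · simp only [dif_neg h]
    exact ⟨(hD v h).choose_spec.1, Or.inr (hD v h).choose_spec.2⟩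

theorem K1rFree.card_le_of_isIndepFinset {r : ℕ} (hG : K1rFree G r) (hr : 2 ≤ r)
    {S : Finset V} (hS : IsIndepFinset G S) {d : V} (hSd : ∀ v ∈ S, v = d ∨ G.Adj d v) :
    S.card ≤ r - 1 := by
  by_cases hd : d ∈ S
  · have : S = {d} := Finset.eq_singleton_iff_unique_mem.mpr
      ⟨hd, fun v hv => (hSd v hv).resolve_right (hS d hd v hv)⟩
    rw [this, Finset.card_singleton]
    omega
  · by_contra! hlt
    obtain ⟨A, hAS, hAcard⟩ := Finset.exists_subset_card_eq (show r ≤ S.card by omega)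
    refine hG ⟨d, A, fun a ha => ?_, fun a ha b hb _ => hS a (hAS ha) b (hAS hb), hAcard⟩
    exact (hSd a (hAS ha)).resolve_left (by rintro rfl; exact hd (hAS ha))

theorem K1rFree.card_le_mul_card_of_isDomFinset [DecidableEq V] {r : ℕ} (hG : K1rFree G r)
    (hr : 2 ≤ r) {S D : Finset V} (hS : IsIndepFinset G S) (hD : IsDomFinset G D) :
    S.card ≤ (r - 1) * D.card := by
  obtain ⟨f, hf⟩ := hD.exists_dominator
  refine Finset.card_le_mul_card_image_of_maps_to (fun v _ => (hf v).1) _ fun d _ => ?_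
  refine hG.card_le_of_isIndepFinset hr (d := d)
    (fun u hu v hv => hS u (Finset.mem_filter.mp hu).1 v (Finset.mem_filter.mp hv).1)
    fun v hv => ?_
  obtain ⟨-, rfl⟩ := Finset.mem_filter.mp hv
  exact (hf v).2.imp Eq.symm id

theorem card_le_mul_of_colorable_induce {k m : ℕ} {X : Finset V}
    (hX : (G.induce (X : Set V)).Colorable k)
    (hindep : ∀ S ⊆ X, IsIndepFinset G S → S.card ≤ m) :
    X.card ≤ m * k := by
  classical
  obtain ⟨C⟩ := hX
  rw [← Finset.card_attach, ← Fintype.card_fin k]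
  refine Finset.card_le_mul_card_image_of_maps_to (f := C) (t := Finset.univ)
    (fun _ _ => Finset.mem_univ _) _ fun c _ => ?_
  rw [← Finset.card_map (Function.Embedding.subtype _)]
  refine hindep _ (fun v hv => ?_) fun u hu v hv hadj => ?_
  · obtain ⟨⟨v, hvX⟩, -, rfl⟩ := Finset.mem_map.mp hv
    exact hvX
  · obtain ⟨u, huc, rfl⟩ := Finset.mem_map.mp hu
    obtain ⟨v, hvc, rfl⟩ := Finset.mem_map.mp hv
    have hcolor : C u = C v :=
      (Finset.mem_filter.mp huc).2.trans (Finset.mem_filter.mp hvc).2.symm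
    exact C.valid (show (G.induce (X : Set V)).Adj u v by simpa using hadj) hcolor

end

theorem stmt2_general [Fintype V] (G : SimpleGraph V) (r k : ℕ) (hr : 3 ≤ r)
    (hG : K1rFree G r) (X : Finset V) (hX : (G.induce (X : Set V)).Colorable k) :
    X.card ≤ (r - 1) * k * domNum G := by
  classical
  obtain ⟨D, hD, hDcard⟩ := exists_isDomFinset_card_eq_domNum G
  calc X.card ≤ (r - 1) * D.card * k :=
        card_le_mul_of_colorable_induce hX fun S _ hS =>
          hG.card_le_mul_card_of_isDomFinset (by omega) hS hD
    _ = (r - 1) * k * domNum G := by rw [hDcard]; ring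

/-- For r ≥ 3, k ≥ 1, in a K_{1,r}-free graph any induced subgraph with
chromatic number at most k has order at most (r-1)·k·γ(G). -/
theorem stmt2 [Fintype V] (G : SimpleGraph V) (r k : ℕ) (hr : 3 ≤ r) (hk : 1 ≤ k)
    (hG : K1rFree G r) (X : Finset V) (hX : (G.induce (X : Set V)).Colorable k) :
    X.card ≤ (r - 1) * k * domNum G :=
  stmt2_general G r k hr hG X hX
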